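/- arXiv:2207.14208 — 2 statements merged into one kernel-verified Lean document; each statement's English description precedes it below -/
import Mathlib

section
/- Fix θ ∈ [0,1) and define G(α, Δτ) = 1 − Δτ·G₀(α) where G₀(α) = (θ(θ−1)/2)e^{−2p(α)} + θ(2−θ)e^{−p(α)} + ((1−θ)(2−θ)/2) and p(α) = arcosh(2 − cos α). Then Δτ_OPT = 2/(G₀(π/2) + G₀(π)) satisfies: for every Δτ > 0, max{|G(π/2, Δτ_OPT)|, |G(π, Δτ_OPT)|} ≤ max{|G(π/2, Δτ)|, |G(π, Δτ)|}. -/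
noncomputable def Real.arcoshLog (x : ℝ) : ℝ := Real.log (x + Real.sqrt (x ^ 2 - 1))

open Real

/-! Both `G₀(π/2)` and `G₀(π)` are values of the quadratic `θ(θ-1)/2 x² + θ(2-θ) x + (1-θ)(2-θ)/2`
at points `x = e^{-arcosh y} ∈ (0, 1)`, where it is positive. For two positive symbols `a, b`,
the step `2/(a+b)` equalises `|1 - s a|` and `|1 - s b|` at `|a - b|/(a + b)`, and no step `s`
does better since `b - a = b (1 - s a) - a (1 - s b)`. -/

lemma Real.arcoshLog_pos {y : ℝ} (hy : 1 < y) : 0 < arcoshLog y :=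
  log_pos (by linarith [sqrt_nonneg (y ^ 2 - 1)])

lemma Real.exp_neg_arcoshLog_lt_one {y : ℝ} (hy : 1 < y) : exp (-arcoshLog y) < 1 :=
  exp_lt_one_iff.mpr (neg_neg_of_pos (arcoshLog_pos hy))

lemma blfa_quadratic_pos {θ x : ℝ} (hθ₀ : 0 ≤ θ) (hθ₁ : θ < 1) (hx₀ : 0 < x) (hx₁ : x < 1) :
    0 < θ * (θ - 1) / 2 * x ^ 2 + θ * (2 - θ) * x + (1 - θ) * (2 - θ) / 2 := by
  nlinarith [mul_nonneg (mul_nonneg hθ₀ (sub_nonneg.mpr hθ₁.le))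
      (mul_nonneg hx₀.le (sub_nonneg.mpr hx₁.le)),
    mul_nonneg (mul_nonneg (sub_nonneg.mpr hx₁.le) (sub_nonneg.mpr hθ₁.le))
      (by linarith : (0 : ℝ) ≤ 2 - θ)]

lemma max_abs_one_sub_two_div_add_mul_le {a b : ℝ} (ha : 0 < a) (hb : 0 < b) (s : ℝ) :
    max |1 - 2 / (a + b) * a| |1 - 2 / (a + b) * b| ≤ max |1 - s * a| |1 - s * b| := by
  have hab : 0 < a + b := add_pos ha hb
  have ea : 1 - 2 / (a + b) * a = (b - a) / (a + b) := by field_simp; ring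
  have eb : 1 - 2 / (a + b) * b = (a - b) / (a + b) := by field_simp; ring
  rw [ea, eb, abs_div, abs_div, abs_sub_comm a b, max_self, abs_of_pos hab, div_le_iff₀ hab]
  calc |b - a| = |b * (1 - s * a) - a * (1 - s * b)| := by ring_nf
    _ ≤ b * |1 - s * a| + a * |1 - s * b| := by
        simpa only [abs_mul, abs_of_pos ha, abs_of_pos hb] using abs_sub (b * (1 - s * a)) (a * (1 - s * b))
    _ ≤ b * max |1 - s * a| |1 - s * b| + a * max |1 - s * a| |1 - s * b| := by
        gcongr
        exacts [le_max_left _ _, le_max_right _ _]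
    _ = max |1 - s * a| |1 - s * b| * (a + b) := by ring

theorem dirichlet_dtau_opt (θ : ℝ) (hθ : θ ∈ Set.Ico (0 : ℝ) 1) :
    let G₀ : ℝ → ℝ := fun α =>
      (θ * (θ - 1) / 2) * Real.exp (-(Real.arcoshLog (2 - Real.cos α))) ^ 2 +
      θ * (2 - θ) * Real.exp (-(Real.arcoshLog (2 - Real.cos α))) +
      (1 - θ) * (2 - θ) / 2
    let Δτopt : ℝ := 2 / (G₀ (π / 2) + G₀ π)
    ∀ Δτ > (0 : ℝ),
      max |1 - Δτopt * G₀ (π / 2)| |1 - Δτopt * G₀ π| ≤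
      max |1 - Δτ * G₀ (π / 2)| |1 - Δτ * G₀ π| := by
  intro G₀ Δτopt Δτ _
  have hG₀ : ∀ α, cos α < 1 → 0 < G₀ α := fun α hα =>
    blfa_quadratic_pos hθ.1 hθ.2 (exp_pos _) (exp_neg_arcoshLog_lt_one (by linarith))
  exact max_abs_one_sub_two_div_add_mul_le (hG₀ _ (by simp)) (hG₀ _ (by simp)) Δτ
end

section
/- For α ∈ (0, π), let p(α) = arcosh(2 − cos α), q = e^{−p(α)}. Define the Neumann coefficients c₋₂ = 1/2 − θ, c₋₁ = 2(θ − 1), c₀ = 3/2 − θ for θ ∈ [0,1). Then for θ ≠ 1/2, the equation q = c₋₁/(−2c₋₂) = 1 + 1/(1 − 2θ) has no solution with α ∈ (π/2, π); and for θ = 1/2, 2c₋₂q + c₋₁ = −1 ≠ 0. Consequently, G₀(α) = c₋₂q² + c₋₁q + c₀ has no stationary points as a function of α on (π/2, π). -/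
open Real

namespace Real

lemma one_lt_add_sqrt_sq_sub_one {x : ℝ} (hx : 1 < x) : 1 < x + √(x ^ 2 - 1) := by
  linarith [sqrt_nonneg (x ^ 2 - 1)]

lemma arcoshLog_pos_s9 {x : ℝ} (hx : 1 < x) : 0 < arcoshLog x :=
  log_pos (one_lt_add_sqrt_sq_sub_one hx)

lemma exp_neg_arcoshLog_mem_Ioo {x : ℝ} (hx : 1 < x) : exp (-arcoshLog x) ∈ Set.Ioo 0 1 :=
  ⟨exp_pos _, exp_lt_one_iff.2 (neg_neg_of_pos (arcoshLog_pos_s9 hx))⟩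

lemma hasDerivAt_arcoshLog {x : ℝ} (hx : 1 < x) :
    HasDerivAt arcoshLog (√(x ^ 2 - 1))⁻¹ x := by
  have hsq_pos : 0 < x ^ 2 - 1 := by nlinarith
  have hsqrt : HasDerivAt (fun y => √(y ^ 2 - 1)) (2 * x / (2 * √(x ^ 2 - 1))) x := by
    simpa using ((hasDerivAt_pow 2 x).sub_const 1).sqrt hsq_pos.ne'
  have hlog : HasDerivAt (fun y => log (y + √(y ^ 2 - 1)))
      ((1 + 2 * x / (2 * √(x ^ 2 - 1))) / (x + √(x ^ 2 - 1))) x :=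
    ((hasDerivAt_id' x).add hsqrt).log (zero_lt_one.trans (one_lt_add_sqrt_sq_sub_one hx)).ne'
  refine hlog.congr_deriv ?_
  field_simp
  ring

lemma one_lt_two_sub_cos {α : ℝ} (hα : α ∈ Set.Ioo 0 π) : 1 < 2 - cos α := by
  linarith [cos_lt_cos_of_nonneg_of_le_pi le_rfl hα.2.le hα.1, cos_zero]

lemma hasDerivAt_exp_neg_arcoshLog_two_sub_cos {α : ℝ} (hα : α ∈ Set.Ioo 0 π) :
    HasDerivAt (fun a => exp (-arcoshLog (2 - cos a)))
      (-(exp (-arcoshLog (2 - cos α)) * (sin α / √((2 - cos α) ^ 2 - 1)))) α := by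
  have hp := (hasDerivAt_arcoshLog (one_lt_two_sub_cos hα)).comp α
    ((hasDerivAt_cos α).const_sub 2)
  refine hp.neg.exp.congr_deriv ?_
  simp only [Function.comp_apply, Pi.neg_apply]
  ring

end Real

lemma HasDerivAt.quadratic_comp {f : ℝ → ℝ} {f' x : ℝ} (a b c : ℝ) (hf : HasDerivAt f f' x) :
    HasDerivAt (fun y => a * f y ^ 2 + b * f y + c) ((2 * a * f x + b) * f') x := by
  refine ((((hf.pow 2).const_mul a).add (hf.const_mul b)).add_const c).congr_deriv ?_
  push_cast
  ring

lemma neumann_slope_neg {θ q : ℝ} (hθ : θ < 1) (hq : q ∈ Set.Ioo 0 1) :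
    2 * (1 / 2 - θ) * q + 2 * (θ - 1) < 0 := by
  have : 2 * (1 / 2 - θ) * q + 2 * (θ - 1) = -(2 * (1 - θ) * (1 - q)) - q := by ring
  rw [this]
  have := mul_pos (sub_pos.2 hθ) (sub_pos.2 hq.2)
  linarith [hq.1]

lemma one_add_one_div_one_sub_two_mul_notMem_Ioo {θ : ℝ} (hθ : θ < 1) (hne : θ ≠ 1 / 2) :
    1 + 1 / (1 - 2 * θ) ∉ Set.Ioo (0 : ℝ) 1 := by
  intro hmem
  have hden : 1 - 2 * θ ≠ 0 := fun h => hne (by linarith)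
  have := neumann_slope_neg hθ hmem
  field_simp at this
  linarith

theorem neumann_no_stationary_points (θ : ℝ) (hθ : θ ∈ Set.Ico (0 : ℝ) 1) :
    (θ ≠ 1 / 2 → ∀ α ∈ Set.Ioo (π / 2) π,
      Real.exp (-(Real.arcoshLog (2 - Real.cos α))) ≠ 1 + 1 / (1 - 2 * θ)) ∧
    (θ = 1 / 2 → ∀ α : ℝ,
      2 * (1 / 2 - θ) * Real.exp (-(Real.arcoshLog (2 - Real.cos α))) + 2 * (θ - 1) = -1) ∧
    ∀ α ∈ Set.Ioo (π / 2) π,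
      deriv (fun a : ℝ =>
        (1 / 2 - θ) * Real.exp (-(Real.arcoshLog (2 - Real.cos a))) ^ 2 +
        2 * (θ - 1) * Real.exp (-(Real.arcoshLog (2 - Real.cos a))) +
        (3 / 2 - θ)) α ≠ 0 := by
  have hsub : Set.Ioo (π / 2) π ⊆ Set.Ioo 0 π := Set.Ioo_subset_Ioo_left (by positivity)
  refine ⟨fun hne α hα hq => ?_, fun h α => by rw [h]; ring, fun α hα => ?_⟩
  · have hmem := exp_neg_arcoshLog_mem_Ioo (one_lt_two_sub_cos (hsub hα))
    exact one_add_one_div_one_sub_two_mul_notMem_Ioo hθ.2 hne (hq ▸ hmem)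
  · have hα' := hsub hα
    have hx := one_lt_two_sub_cos hα'
    have hq := exp_neg_arcoshLog_mem_Ioo hx
    have hp' : 0 < sin α / √((2 - cos α) ^ 2 - 1) :=
      div_pos (sin_pos_of_pos_of_lt_pi hα'.1 hα'.2) (sqrt_pos.2 (by nlinarith))
    rw [((hasDerivAt_exp_neg_arcoshLog_two_sub_cos hα').quadratic_comp _ _ _).deriv]
    exact mul_ne_zero (neumann_slope_neg hθ.2 hq).ne (neg_ne_zero.2 (mul_pos hq.1 hp').ne')
end
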